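/- arXiv:1707.04151 — 4 statements merged into one kernel-verified Lean document; each statement's English description precedes it below -/
import Mathlib

section
/- Let H = (M, n, R) be a constant-rate multi-mode system and let S ⊆ ℝⁿ be an open, convex set. For any two points x_s ∈ S and x_t ∈ S, there exists an S-safe finite schedule steering H from x_s to x_t if and only if there exists a function t : M → ℝ with t(m) ≥ 0 for all m ∈ M such that x_s + Σ_{m ∈ M} t(m) · R(m) = x_t. -/
/-- The terminal state of the run of a schedule (a list of timed actions) from a state. -/
def runEnd {M V : Type*} [AddCommGroup V] [Module ℝ V] (R : M → V) : V → List (M × ℝ) → V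
  | x, [] => x
  | x, (m, t) :: σ => runEnd R (x + t • R m) σ

/-- A schedule is `S`-safe from `x` if every point visited during its run
(including along each timed action) lies in `S`. -/
def SafeSched {M V : Type*} [AddCommGroup V] [Module ℝ V] (R : M → V) (S : Set V) :
    V → List (M × ℝ) → Prop
  | _, [] => True
  | x, (m, t) :: σ =>
      (∀ τ ∈ Set.Icc (0 : ℝ) t, x + τ • R m ∈ S) ∧ SafeSched R S (x + t • R m) σ

/-!
Where a schedule ends depends only on its net displacement, and grouping its durations by mode
writes that as `∑ m, t m • R m` with `t ≥ 0`. Conversely, cycling `K` times through all modes with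
durations `t m / K` reaches `x_t` in `K` rounds; the `j`-th round starts at the point
`x_s + (j / K) • (x_t - x_s)` of the segment and never leaves the closed ball of radius
`(∑ m, t m * ‖R m‖) / K` around it. The segment is compact and, by convexity, lies in the open
set `S`, so some `δ`-neighbourhood of it does too, and any `K` with `(∑ m, t m * ‖R m‖) / K < δ`
makes the schedule safe.
-/

open Metric

section Run

variable {M V : Type*} [AddCommGroup V] [Module ℝ V] (R : M → V)

def displacement (σ : List (M × ℝ)) : V := (σ.map fun p => p.2 • R p.1).sum

lemma displacement_cons (m : M) (t : ℝ) (σ : List (M × ℝ)) :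
    displacement R ((m, t) :: σ) = t • R m + displacement R σ := by
  simp [displacement]

lemma displacement_flatten_replicate (k : ℕ) (σ : List (M × ℝ)) :
    displacement R (List.replicate k σ).flatten = k • displacement R σ := by
  simp [displacement, List.map_flatten, List.sum_flatten, List.map_replicate]

lemma runEnd_eq_add_displacement (x : V) (σ : List (M × ℝ)) :
    runEnd R x σ = x + displacement R σ := by
  induction σ generalizing x with
  | nil => simp [runEnd, displacement]
  | cons p σ ih =>
    obtain ⟨m, t⟩ := p
    simp [runEnd, ih, displacement_cons, add_assoc]

lemma safeSched_append {S : Set V} (x : V) (σ₁ σ₂ : List (M × ℝ)) :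
    SafeSched R S x (σ₁ ++ σ₂) ↔ SafeSched R S x σ₁ ∧ SafeSched R S (runEnd R x σ₁) σ₂ := by
  induction σ₁ generalizing x with
  | nil => simp [SafeSched, runEnd]
  | cons p σ ih => simp [SafeSched, runEnd, ih, and_assoc]

lemma exists_nonneg_displacement_eq_sum [Fintype M] {σ : List (M × ℝ)}
    (hσ : ∀ p ∈ σ, 0 ≤ p.2) :
    ∃ t : M → ℝ, (∀ m, 0 ≤ t m) ∧ displacement R σ = ∑ m, t m • R m := by
  classical
  induction σ with
  | nil => exact ⟨0, fun _ => le_rfl, by simp [displacement]⟩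
  | cons p σ ih =>
    obtain ⟨m₀, s⟩ := p
    have hs : 0 ≤ s := hσ _ List.mem_cons_self
    obtain ⟨t, ht, hσt⟩ := ih fun p hp => hσ p (List.mem_cons_of_mem _ hp)
    refine ⟨fun m => t m + if m = m₀ then s else 0,
      fun m => add_nonneg (ht m) (by split_ifs <;> simp [hs]), ?_⟩
    simp only [displacement_cons, hσt, add_smul, Finset.sum_add_distrib, ite_smul, zero_smul,
      Finset.sum_ite_eq', Finset.mem_univ, if_true]
    abel

end Run

section Safety

variable {M V : Type*} [SeminormedAddCommGroup V] (R : M → V)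

/-- The length of the run of a schedule with nonnegative durations. -/
def pathLength (σ : List (M × ℝ)) : ℝ := (σ.map fun p => p.2 * ‖R p.1‖).sum

lemma pathLength_cons (m : M) (t : ℝ) (σ : List (M × ℝ)) :
    pathLength R ((m, t) :: σ) = t * ‖R m‖ + pathLength R σ := by
  simp [pathLength]

lemma pathLength_nonneg {σ : List (M × ℝ)} (hσ : ∀ p ∈ σ, 0 ≤ p.2) : 0 ≤ pathLength R σ :=
  List.sum_nonneg <| by
    simp only [List.mem_map]
    rintro _ ⟨p, hp, rfl⟩
    exact mul_nonneg (hσ p hp) (norm_nonneg _)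

variable [NormedSpace ℝ V]

lemma safeSched_of_closedBall_subset {S : Set V} {σ : List (M × ℝ)} (hσ : ∀ p ∈ σ, 0 ≤ p.2)
    {x : V} (hS : closedBall x (pathLength R σ) ⊆ S) : SafeSched R S x σ := by
  induction σ generalizing x with
  | nil => trivial
  | cons p σ ih =>
    obtain ⟨m, t⟩ := p
    have ht : 0 ≤ t := hσ _ List.mem_cons_self
    rw [pathLength_cons] at hS
    refine ⟨fun τ hτ => hS ?_, ih (fun p hp => hσ p (List.mem_cons_of_mem _ hp)) ?_⟩
    · have : τ * ‖R m‖ ≤ t * ‖R m‖ := mul_le_mul_of_nonneg_right hτ.2 (norm_nonneg _)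
      have := pathLength_nonneg R fun p hp => hσ p (List.mem_cons_of_mem _ hp)
      rw [mem_closedBall, dist_self_add_left, norm_smul, Real.norm_of_nonneg hτ.1]
      linarith
    · refine (closedBall_subset_closedBall' ?_).trans hS
      rw [dist_self_add_left, norm_smul, Real.norm_of_nonneg ht]
      linarith

lemma safeSched_flatten_replicate {S : Set V} {σ : List (M × ℝ)} (hσ : ∀ p ∈ σ, 0 ≤ p.2)
    (k : ℕ) (x : V)
    (hS : ∀ j < k, closedBall (x + j • displacement R σ) (pathLength R σ) ⊆ S) :
    SafeSched R S x (List.replicate k σ).flatten := by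
  induction k generalizing x with
  | zero => trivial
  | succ k ih =>
    rw [List.replicate_succ, List.flatten_cons, safeSched_append, runEnd_eq_add_displacement]
    refine ⟨safeSched_of_closedBall_subset R hσ (by simpa using hS 0 k.succ_pos),
      ih _ fun j hj => ?_⟩
    simpa [succ_nsmul', add_assoc] using hS (j + 1) (by omega)

end Safety

section RoundRobin

variable {M V : Type*} [Fintype M]

noncomputable def roundRobin (t : M → ℝ) : List (M × ℝ) :=
  Finset.univ.toList.map fun m => (m, t m)

lemma roundRobin_nonneg {t : M → ℝ} (ht : ∀ m, 0 ≤ t m) : ∀ p ∈ roundRobin t, 0 ≤ p.2 := by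
  simp [roundRobin, ht]

lemma displacement_roundRobin [AddCommGroup V] [Module ℝ V] (R : M → V) (t : M → ℝ) :
    displacement R (roundRobin t) = ∑ m, t m • R m := by
  simp [displacement, roundRobin, Function.comp_def, Finset.sum_map_toList]

lemma pathLength_roundRobin [SeminormedAddCommGroup V] (R : M → V) (t : M → ℝ) :
    pathLength R (roundRobin t) = ∑ m, t m * ‖R m‖ := by
  simp [pathLength, roundRobin, Function.comp_def, Finset.sum_map_toList]

end RoundRobin

theorem exists_safeSched_of_isOpen_of_convex {M V : Type*} [Fintype M] [SeminormedAddCommGroup V]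
    [NormedSpace ℝ V] (R : M → V) {S : Set V} (hSo : IsOpen S) (hSc : Convex ℝ S) {x : V}
    {t : M → ℝ} (ht : ∀ m, 0 ≤ t m) (hx : x ∈ S) (hy : x + ∑ m, t m • R m ∈ S) :
    ∃ σ : List (M × ℝ), (∀ p ∈ σ, 0 ≤ p.2) ∧ SafeSched R S x σ ∧
      runEnd R x σ = x + ∑ m, t m • R m := by
  set v := ∑ m, t m • R m
  have hcompact : IsCompact (segment ℝ x (x + v)) := by
    rw [segment_eq_image']
    exact isCompact_Icc.image (by fun_prop)
  obtain ⟨δ, hδ, hδS⟩ := hcompact.exists_thickening_subset_open hSo (hSc.segment_subset hx hy)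
  set L := ∑ m, t m * ‖R m‖
  obtain ⟨K, hK⟩ := exists_nat_gt (L / δ)
  have hK0 : (0 : ℝ) < K :=
    (div_nonneg (Finset.sum_nonneg fun m _ => mul_nonneg (ht m) (norm_nonneg _)) hδ.le).trans_lt hK
  set τ : M → ℝ := fun m => t m / K
  have hσ := roundRobin_nonneg (fun m => div_nonneg (ht m) hK0.le : ∀ m, 0 ≤ τ m)
  have hdisp : displacement R (roundRobin τ) = (K : ℝ)⁻¹ • v := by
    simp only [displacement_roundRobin, v, Finset.smul_sum, smul_smul, τ, div_eq_inv_mul]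
  have hlen : pathLength R (roundRobin τ) < δ := by
    have : pathLength R (roundRobin τ) = L / K := by
      simp only [pathLength_roundRobin, L, Finset.sum_div, τ, div_mul_eq_mul_div]
    rw [this, div_lt_iff₀ hK0, mul_comm]
    exact (div_lt_iff₀ hδ).1 hK
  refine ⟨(List.replicate K (roundRobin τ)).flatten, ?_,
    safeSched_flatten_replicate R hσ K x fun j hj => ?_, ?_⟩
  · simp only [List.mem_flatten, List.mem_replicate]
    rintro p ⟨l, ⟨-, rfl⟩, hp⟩
    exact hσ p hp
  · have hj : x + j • displacement R (roundRobin τ) ∈ segment ℝ x (x + v) := by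
      rw [segment_eq_image']
      refine ⟨j / K, ⟨by positivity, (div_le_one hK0).2 (by exact_mod_cast hj.le)⟩, ?_⟩
      rw [hdisp, ← Nat.cast_smul_eq_nsmul ℝ, smul_smul, add_sub_cancel_left, div_eq_mul_inv]
    exact (closedBall_subset_ball hlen).trans ((ball_subset_thickening hj δ).trans hδS)
  · rw [runEnd_eq_add_displacement, displacement_flatten_replicate, hdisp,
      ← Nat.cast_smul_eq_nsmul ℝ, smul_smul, mul_inv_cancel₀ hK0.ne', one_smul]

theorem stmt0_general {M : Type*} [Fintype M] {n : ℕ}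
    (R : M → (Fin n → ℝ)) (S : Set (Fin n → ℝ))
    (hSopen : IsOpen S) (hSconv : Convex ℝ S)
    (xs xt : Fin n → ℝ) (hxs : xs ∈ S) (hxt : xt ∈ S) :
    (∃ σ : List (M × ℝ), (∀ p ∈ σ, 0 ≤ p.2) ∧ SafeSched R S xs σ ∧ runEnd R xs σ = xt) ↔
      (∃ t : M → ℝ, (∀ m, 0 ≤ t m) ∧ xs + ∑ m, t m • R m = xt) := by
  constructor
  · rintro ⟨σ, hσ, -, rfl⟩
    obtain ⟨t, ht, hσt⟩ := exists_nonneg_displacement_eq_sum R hσ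
    exact ⟨t, ht, by rw [runEnd_eq_add_displacement, hσt]⟩
  · rintro ⟨t, ht, rfl⟩
    exact exists_safeSched_of_isOpen_of_convex R hSopen hSconv ht hxs hxt

/-- Theorem of Alur, Trivedi and Wojtczak: for an open convex safety set `S` and
`x_s, x_t ∈ S`, an `S`-safe schedule from `x_s` to `x_t` exists iff there are
nonnegative dwell times `t : M → ℝ` with `x_s + ∑ m, t m • R m = x_t`. -/
theorem stmt0 {M : Type*} [Fintype M] [Nonempty M] {n : ℕ} (hn : 0 < n)
    (R : M → (Fin n → ℝ)) (S : Set (Fin n → ℝ))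
    (hSopen : IsOpen S) (hSconv : Convex ℝ S)
    (xs xt : Fin n → ℝ) (hxs : xs ∈ S) (hxt : xt ∈ S) :
    (∃ σ : List (M × ℝ), (∀ p ∈ σ, 0 ≤ p.2) ∧ SafeSched R S xs σ ∧ runEnd R xs σ = xt) ↔
      (∃ t : M → ℝ, (∀ m, 0 ≤ t m) ∧ xs + ∑ m, t m • R m = xt) :=
  stmt0_general R S hSopen hSconv xs xt hxs hxt
end

section
/- Let H = (M, n, R) be a constant-rate multi-mode system, S ⊆ ℝⁿ an open set, C a cell cover of S, and x_s, x_t ∈ S. There exists a witness channel in S for (H, x_s, x_t) if and only if there exists a witness channel for (H, x_s, x_t) all of whose cells belong to C. -/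
/-- A cell of `S` is an open, convex subset of `S`. -/
def IsCell {n : ℕ} (S c : Set (Fin n → ℝ)) : Prop :=
  IsOpen c ∧ Convex ℝ c ∧ c ⊆ S

/-- A cell cover of `S` is a collection of cells of `S` whose union equals `S`. -/
def IsCellCover {n : ℕ} (S : Set (Fin n → ℝ)) (C : Set (Set (Fin n → ℝ))) : Prop :=
  (∀ c ∈ C, IsCell S c) ∧ ⋃₀ C = S

/-- `c 1, …, c N` is a channel in `S`: a finite sequence of cells of `S` in which
consecutive cells intersect. -/
def IsChannel {n : ℕ} (S : Set (Fin n → ℝ)) (N : ℕ) (c : ℕ → Set (Fin n → ℝ)) : Prop :=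
  1 ≤ N ∧ (∀ i, 1 ≤ i → i ≤ N → IsCell S (c i)) ∧
    ∀ i, 1 ≤ i → i < N → (c i ∩ c (i + 1)).Nonempty

/-- The channel `c 1, …, c N` is a witness to reachability for `(H, x_s, x_t)`. -/
def IsWitness {M : Type*} [Fintype M] {n : ℕ} (R : M → (Fin n → ℝ))
    (xs xt : Fin n → ℝ) (N : ℕ) (c : ℕ → Set (Fin n → ℝ)) : Prop :=
  ∃ x : ℕ → (Fin n → ℝ),
    x 0 = xs ∧ x N = xt ∧ x 0 ∈ c 1 ∧ x N ∈ c N ∧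
    (∀ i, 1 ≤ i → i < N → x i ∈ c i ∩ c (i + 1)) ∧
    ∃ t : ℕ → M → ℝ, (∀ i m, 0 ≤ t i m) ∧
      ∀ i, 1 ≤ i → i ≤ N → x i = x (i - 1) + ∑ m, t i m • R m

/-!
A witness step from `x (k - 1)` to `x k` inside a convex cell is a segment of `S` whose
direction `∑ t m • R m` lies in the cone of rates. A Lebesgue number of the open cover `C`
along this compact segment cuts it into `K` equal pieces, each inside a single cell of `C`;
each piece is the step `∑ (t m / K) • R m`, so it is a one-cell witness from `C`, and
concatenating these witnesses gives a channel made of cells of `C`.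
-/

open Metric

def seqAppend {α : Type*} (N : ℕ) (f g : ℕ → α) (i : ℕ) : α :=
  if i ≤ N then f i else g (i - N)

lemma seqAppend_of_le {α : Type*} {N i : ℕ} {f g : ℕ → α} (hi : i ≤ N) :
    seqAppend N f g i = f i :=
  if_pos hi

lemma seqAppend_of_lt {α : Type*} {N i : ℕ} {f g : ℕ → α} (hi : N < i) :
    seqAppend N f g i = g (i - N) :=
  if_neg hi.not_ge

lemma seqAppend_mem_of_forall {α : Type*} {N N' : ℕ} {f g : ℕ → α} {p : α → Prop}
    (hf : ∀ i, 1 ≤ i → i ≤ N → p (f i)) (hg : ∀ i, 1 ≤ i → i ≤ N' → p (g i)) :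
    ∀ i, 1 ≤ i → i ≤ N + N' → p (seqAppend N f g i) := by
  intro i hi1 hiN
  rcases le_or_gt i N with hi | hi
  · rw [seqAppend_of_le hi]; exact hf i hi1 hi
  · rw [seqAppend_of_lt hi]; exact hg _ (by omega) (by omega)

section Reachability

variable {M : Type*} [Fintype M] {n : ℕ} {R : M → (Fin n → ℝ)}

lemma isWitness_iff {xs xt : Fin n → ℝ} {N : ℕ} {c : ℕ → Set (Fin n → ℝ)} (hN : 1 ≤ N) :
    IsWitness R xs xt N c ↔
      ∃ (x : ℕ → (Fin n → ℝ)) (t : ℕ → M → ℝ), x 0 = xs ∧ x N = xt ∧ (∀ i m, 0 ≤ t i m) ∧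
        ∀ k, 1 ≤ k → k ≤ N →
          x (k - 1) ∈ c k ∧ x k ∈ c k ∧ x k = x (k - 1) + ∑ m, t k m • R m := by
  constructor
  · rintro ⟨x, hx0, hxN, hxc1, hxcN, hmid, t, ht, hstep⟩
    refine ⟨x, t, hx0, hxN, ht, fun k hk1 hkN => ⟨?_, ?_, hstep k hk1 hkN⟩⟩
    · rcases hk1.eq_or_lt with rfl | hk1
      · exact hxc1
      · simpa [Nat.sub_add_cancel hk1.le] using (hmid (k - 1) (by omega) (by omega)).2
    · rcases hkN.eq_or_lt with rfl | hkN
      · exact hxcN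
      · exact (hmid k hk1 hkN).1
  · rintro ⟨x, t, hx0, hxN, ht, hstep⟩
    refine ⟨x, hx0, hxN, (hstep 1 le_rfl hN).1, (hstep N hN le_rfl).2.1,
      fun i hi1 hiN => ⟨(hstep i hi1 hiN.le).2.1, ?_⟩, t, ht,
      fun k hk1 hkN => (hstep k hk1 hkN).2.2⟩
    simpa using (hstep (i + 1) (by omega) hiN).1

lemma IsWitness.isChannel {S : Set (Fin n → ℝ)} {xs xt : Fin n → ℝ} {N : ℕ}
    {c : ℕ → Set (Fin n → ℝ)} (hw : IsWitness R xs xt N c) (hN : 1 ≤ N)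
    (hcell : ∀ i, 1 ≤ i → i ≤ N → IsCell S (c i)) : IsChannel S N c := by
  obtain ⟨x, -, -, -, -, hmid, -⟩ := hw
  exact ⟨hN, hcell, fun i hi1 hiN => ⟨x i, hmid i hi1 hiN⟩⟩

variable (R) (S : Set (Fin n → ℝ)) (C : Set (Set (Fin n → ℝ)))

def CoverReachable (a b : Fin n → ℝ) : Prop :=
  ∃ (N : ℕ) (c : ℕ → Set (Fin n → ℝ)), IsChannel S N c ∧
    (∀ i, 1 ≤ i → i ≤ N → c i ∈ C) ∧ IsWitness R a b N c

variable {R S C}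

lemma CoverReachable.trans {a b e : Fin n → ℝ} (hab : CoverReachable R S C a b)
    (hbe : CoverReachable R S C b e) : CoverReachable R S C a e := by
  obtain ⟨N₁, c₁, ⟨hN₁, hcell₁, -⟩, hC₁, hw₁⟩ := hab
  obtain ⟨N₂, c₂, ⟨hN₂, hcell₂, -⟩, hC₂, hw₂⟩ := hbe
  obtain ⟨x₁, t₁, hx₁0, hx₁N, ht₁, hstep₁⟩ := (isWitness_iff hN₁).1 hw₁
  obtain ⟨x₂, t₂, hx₂0, hx₂N, ht₂, hstep₂⟩ := (isWitness_iff hN₂).1 hw₂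
  have hx_right : ∀ i, N₁ ≤ i → seqAppend N₁ x₁ x₂ i = x₂ (i - N₁) := by
    intro i hi
    rcases hi.eq_or_lt with rfl | hi
    · simp [seqAppend_of_le, hx₁N, hx₂0]
    · exact seqAppend_of_lt hi
  have hN : 1 ≤ N₁ + N₂ := by omega
  have hw : IsWitness R a e (N₁ + N₂) (seqAppend N₁ c₁ c₂) := by
    refine (isWitness_iff hN).2 ⟨seqAppend N₁ x₁ x₂, seqAppend N₁ t₁ t₂, ?_, ?_, ?_, ?_⟩
    · rw [seqAppend_of_le (Nat.zero_le _), hx₁0]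
    · rw [hx_right _ (by omega), Nat.add_sub_cancel_left, hx₂N]
    · intro i m
      unfold seqAppend
      split_ifs
      exacts [ht₁ i m, ht₂ _ m]
    · intro k hk1 hkN
      rcases le_or_gt k N₁ with hk | hk
      · rw [seqAppend_of_le hk, seqAppend_of_le (by omega), seqAppend_of_le hk, seqAppend_of_le hk]
        exact hstep₁ k hk1 hk
      · rw [seqAppend_of_lt hk, hx_right _ hk.le, hx_right _ (by omega), seqAppend_of_lt hk,
          show k - 1 - N₁ = k - N₁ - 1 by omega]
        exact hstep₂ _ (by omega) (by omega)
  exact ⟨N₁ + N₂, seqAppend N₁ c₁ c₂, hw.isChannel hN (seqAppend_mem_of_forall hcell₁ hcell₂),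
    seqAppend_mem_of_forall hC₁ hC₂, hw⟩

lemma coverReachable_of_mem {d : Set (Fin n → ℝ)} (hC : ∀ c ∈ C, IsCell S c) (hd : d ∈ C)
    {a b : Fin n → ℝ} (ha : a ∈ d) (hb : b ∈ d) {t : M → ℝ} (ht : ∀ m, 0 ≤ t m)
    (hab : b = a + ∑ m, t m • R m) : CoverReachable R S C a b := by
  have hw : IsWitness R a b 1 fun _ => d := by
    refine (isWitness_iff le_rfl).2 ⟨fun i => if i = 0 then a else b, fun _ => t, rfl, rfl,
      fun _ => ht, fun k hk1 hk => ?_⟩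
    obtain rfl : k = 1 := le_antisymm hk hk1
    exact ⟨ha, hb, hab⟩
  exact ⟨1, fun _ => d, hw.isChannel le_rfl fun _ _ _ => hC d hd, fun _ _ _ => hd, hw⟩

lemma CoverReachable.of_forall_succ {x : ℕ → (Fin n → ℝ)} {N : ℕ} (hN : 1 ≤ N)
    (h : ∀ k, 1 ≤ k → k ≤ N → CoverReachable R S C (x (k - 1)) (x k)) :
    CoverReachable R S C (x 0) (x N) := by
  induction N, hN using Nat.le_induction with
  | base => exact h 1 le_rfl le_rfl
  | succ N hN ih =>
    exact (ih fun k hk1 hkN => h k hk1 (by omega)).trans (h (N + 1) (by omega) le_rfl)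

lemma coverReachable_of_segment_subset (hC : IsCellCover S C) {a b : Fin n → ℝ}
    (hseg : segment ℝ a b ⊆ S) {t : M → ℝ} (ht : ∀ m, 0 ≤ t m) (hab : b = a + ∑ m, t m • R m) :
    CoverReachable R S C a b := by
  obtain ⟨δ, hδ, hball⟩ := lebesgue_number_lemma_of_metric_sUnion
    (segment_eq_image_lineMap ℝ a b ▸ isCompact_Icc.image AffineMap.lineMap_continuous)
    (fun d hd => (hC.1 d hd).1) (hC.2 ▸ hseg)
  obtain ⟨k, hk⟩ := exists_nat_gt (dist a b / δ)
  have hk₀ : (0 : ℝ) < k + 1 := by positivity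
  let x : ℕ → (Fin n → ℝ) := fun j => AffineMap.lineMap a b ((j : ℝ) / (k + 1))
  have hx_step : ∀ j, 1 ≤ j → x j = x (j - 1) + ∑ m, (t m / (k + 1)) • R m := by
    intro j hj
    simp only [x, AffineMap.lineMap_apply_module', Nat.cast_sub hj, hab, div_eq_inv_mul,
      mul_smul, ← Finset.smul_sum]
    module
  have hx_dist : ∀ j, 1 ≤ j → dist (x j) (x (j - 1)) < δ := by
    intro j hj
    calc dist (x j) (x (j - 1)) = dist a b / (k + 1) := by
          rw [dist_lineMap_lineMap, Nat.cast_sub hj, Real.dist_eq, ← sub_div, abs_div,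
            abs_of_pos hk₀]
          simp [inv_mul_eq_div]
      _ < δ := by
          rw [div_lt_iff₀ hk₀]
          rw [div_lt_iff₀ hδ] at hk
          nlinarith
  have hx_seg : ∀ j, j ≤ k + 1 → x j ∈ segment ℝ a b := by
    intro j hj
    exact lineMap_mem_segment _ _ _
      ⟨by positivity, div_le_one_of_le₀ (by exact_mod_cast hj) hk₀.le⟩
  have hx_end : x (k + 1) = b := by
    simp [x, div_self hk₀.ne']
  rw [← hx_end, show a = x 0 by simp [x]]
  refine CoverReachable.of_forall_succ (Nat.le_add_left 1 k) fun j hj1 hjk => ?_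
  obtain ⟨d, hd, hball_d⟩ := hball _ (hx_seg (j - 1) (by omega))
  exact coverReachable_of_mem hC.1 hd (hball_d (mem_ball_self hδ)) (hball_d (hx_dist j hj1))
    (fun m => div_nonneg (ht m) hk₀.le) (hx_step j hj1)

end Reachability

theorem stmt5_general {M : Type*} [Fintype M] {n : ℕ}
    (R : M → (Fin n → ℝ)) (S : Set (Fin n → ℝ))
    (C : Set (Set (Fin n → ℝ))) (hC : IsCellCover S C)
    (xs xt : Fin n → ℝ) :
    (∃ (N : ℕ) (c : ℕ → Set (Fin n → ℝ)), IsChannel S N c ∧ IsWitness R xs xt N c) ↔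
      (∃ (N : ℕ) (c : ℕ → Set (Fin n → ℝ)), IsChannel S N c ∧
        (∀ i, 1 ≤ i → i ≤ N → c i ∈ C) ∧ IsWitness R xs xt N c) := by
  refine ⟨?_, fun ⟨N, c, hch, _, hw⟩ => ⟨N, c, hch, hw⟩⟩
  rintro ⟨N, c, ⟨hN, hcell, -⟩, hw⟩
  obtain ⟨x, t, rfl, rfl, ht, hstep⟩ := (isWitness_iff hN).1 hw
  refine CoverReachable.of_forall_succ hN fun k hk1 hkN => ?_
  obtain ⟨hprev, hcur, hdyn⟩ := hstep k hk1 hkN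
  obtain ⟨-, hconv, hsub⟩ := hcell k hk1 hkN
  exact coverReachable_of_segment_subset hC ((hconv.segment_subset hprev hcur).trans hsub)
    (ht k) hdyn

/-- For an open safety set `S` with cell cover `C`, there is a witness channel in `S`
for `(H, x_s, x_t)` iff there is a witness channel all of whose cells belong to `C`. -/
theorem stmt5 {M : Type*} [Fintype M] [Nonempty M] {n : ℕ} (hn : 0 < n)
    (R : M → (Fin n → ℝ)) (S : Set (Fin n → ℝ)) (hSopen : IsOpen S)
    (C : Set (Set (Fin n → ℝ))) (hC : IsCellCover S C)
    (xs xt : Fin n → ℝ) (hxs : xs ∈ S) (hxt : xt ∈ S) :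
    (∃ (N : ℕ) (c : ℕ → Set (Fin n → ℝ)), IsChannel S N c ∧ IsWitness R xs xt N c) ↔
      (∃ (N : ℕ) (c : ℕ → Set (Fin n → ℝ)), IsChannel S N c ∧
        (∀ i, 1 ≤ i → i ≤ N → c i ∈ C) ∧ IsWitness R xs xt N c) :=
  stmt5_general R S C hC xs xt
end

section
/- Let H = (M, n, R) be a constant-rate multi-mode system, S ⊆ ℝⁿ an open set, C a cell cover of S, and x_s, x_t ∈ S. If there exists a finite S-safe schedule steering H from x_s to x_t, then there exists a witness channel ⟨c_1, …, c_N⟩ for (H, x_s, x_t) whose cells all belong to C and are pairwise distinct; in particular, if C is finite, then N ≤ |C|. -/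
/-!
Follow the safe run and record the cells it passes through. Every straight piece of the run
is a compact segment inside the open cover `C`, so it splits into finitely many subsegments,
each lying in a single cell; the displacement across a subsegment is a nonnegative multiple of a
rate vector. Displacements in the cone spanned by the rates add up, so when the run re-enters a
cell already on the channel, the channel can be cut back to that cell and the accumulated
displacement charged to its last step. Maintaining this invariant keeps the cells distinct.
-/

open Set Function

open scoped NNReal

section CellChain

variable {V : Type*} [AddCommGroup V]

/-- A witness channel from `xs` to `y` with distinct cells from `C`, the cone of displacements
`∑ m, t m • R m` (`t ≥ 0`) abstracted to `K`. -/
structure IsCellChain (C : Set (Set V)) (K : AddSubmonoid V) (xs y : V) (N : ℕ)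
    (c : ℕ → Set V) (x : ℕ → V) : Prop where
  one_le : 1 ≤ N
  mem : ∀ i ∈ Icc 1 N, c i ∈ C
  injOn : InjOn c (Icc 1 N)
  zero_eq : x 0 = xs
  last_eq : x N = y
  start_mem : xs ∈ c 1
  stop_mem : y ∈ c N
  link : ∀ i, 1 ≤ i → i < N → x i ∈ c i ∩ c (i + 1)
  step : ∀ i, 1 ≤ i → i ≤ N → x i - x (i - 1) ∈ K

def CellChainReachable (C : Set (Set V)) (K : AddSubmonoid V) (xs y : V) : Prop :=
  ∃ N c x, IsCellChain C K xs y N c x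

variable {C : Set (Set V)} {K : AddSubmonoid V} {xs y z : V} {N : ℕ} {c : ℕ → Set V}
  {x : ℕ → V}

namespace IsCellChain

theorem sub_mem_of_le (h : IsCellChain C K xs y N c x) {j k : ℕ} (hjk : j ≤ k) (hk : k ≤ N) :
    x k - x j ∈ K := by
  induction k, hjk using Nat.le_induction with
  | base => simp
  | succ k _ ih =>
    rw [← sub_add_sub_cancel' (x k), add_comm]
    simpa using K.add_mem (ih (by omega)) (h.step (k + 1) (by omega) hk)

theorem truncate (h : IsCellChain C K xs y N c x) {j : ℕ} (hj : 1 ≤ j) (hjN : j ≤ N)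
    (hz : z ∈ c j) (hzy : z - y ∈ K) : IsCellChain C K xs z j c (update x j z) where
  one_le := hj
  mem i hi := h.mem i ⟨hi.1, hi.2.trans hjN⟩
  injOn := h.injOn.mono (Icc_subset_Icc_right hjN)
  zero_eq := by rw [update_of_ne (show 0 ≠ j by omega), h.zero_eq]
  last_eq := update_self ..
  start_mem := h.start_mem
  stop_mem := hz
  link i hi hij := by rw [update_of_ne hij.ne]; exact h.link i hi (by omega)
  step i hi hij := by
    rw [update_of_ne (by omega : i - 1 ≠ j)]
    rcases hij.lt_or_eq with hij | rfl
    · rw [update_of_ne hij.ne]; exact h.step i hi (by omega)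
    · rw [update_self, ← sub_add_sub_cancel z y (x (i - 1)), ← h.last_eq]
      exact K.add_mem (h.last_eq ▸ hzy) (h.sub_mem_of_le (by omega) le_rfl)

theorem snoc (h : IsCellChain C K xs y N c x) {d : Set V} (hd : d ∈ C) (hdc : d ∉ c '' Icc 1 N)
    (hy : y ∈ d) (hz : z ∈ d) (hzy : z - y ∈ K) :
    IsCellChain C K xs z (N + 1) (update c (N + 1) d) (update x (N + 1) z) := by
  have hc : EqOn (update c (N + 1) d) c (Icc 1 N) := fun i hi => update_of_ne (by grind) ..
  have hx (i) (hi : i ≤ N) : update x (N + 1) z i = x i := update_of_ne (by omega) ..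
  refine ⟨by omega, fun i hi => ?_, ?_, (hx 0 (by omega)).trans h.zero_eq, update_self .., ?_,
    by rwa [update_self], fun i hi hiN => ?_, fun i hi hiN => ?_⟩
  · rcases eq_or_ne i (N + 1) with rfl | hi'
    · rwa [update_self]
    · rw [update_of_ne hi']; exact h.mem i ⟨hi.1, by grind⟩
  · rw [← insert_Icc_right_eq_Icc_add_one (by omega), injOn_insert (by simp), update_self,
      hc.image_eq]
    exact ⟨h.injOn.congr hc.symm, hdc⟩
  · rw [hc ⟨le_rfl, h.one_le⟩]; exact h.start_mem
  · rcases (Nat.lt_succ_iff.1 hiN).lt_or_eq with hiN | rfl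
    · rw [hx i hiN.le, hc ⟨hi, hiN.le⟩, hc ⟨by omega, hiN⟩]; exact h.link i hi hiN
    · rw [hx i le_rfl, hc ⟨hi, le_rfl⟩, update_self, h.last_eq]; exact ⟨h.stop_mem, hy⟩
  · rw [hx (i - 1) (by omega)]
    rcases hiN.lt_or_eq with hiN | rfl
    · rw [hx i (by omega)]; exact h.step i hi (by omega)
    · rw [update_self, Nat.add_sub_cancel, h.last_eq]; exact hzy

end IsCellChain

namespace CellChainReachable

theorem refl {c₀ : Set V} (hc₀ : c₀ ∈ C) (hxs : xs ∈ c₀) : CellChainReachable C K xs xs :=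
  ⟨1, fun _ => c₀, fun _ => xs,
    { one_le := le_rfl
      mem := fun _ _ => hc₀
      injOn := by simp
      zero_eq := rfl
      last_eq := rfl
      start_mem := hxs
      stop_mem := hxs
      link := fun i hi hi1 => by omega
      step := fun _ _ _ => by simp }⟩

theorem extend (h : CellChainReachable C K xs y) {d : Set V} (hd : d ∈ C) (hy : y ∈ d)
    (hz : z ∈ d) (hzy : z - y ∈ K) : CellChainReachable C K xs z := by
  obtain ⟨N, c, x, h⟩ := h
  by_cases hdc : d ∈ c '' Icc 1 N
  · obtain ⟨j, hj, rfl⟩ := hdc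
    exact ⟨j, c, _, h.truncate hj.1 hj.2 hz hzy⟩
  · exact ⟨N + 1, _, _, h.snoc hd hdc hy hz hzy⟩

variable [TopologicalSpace V] [IsTopologicalAddGroup V] [Module ℝ V] [ContinuousSMul ℝ V]

theorem add_smul (h : CellChainReachable C K xs y) (hC : ∀ c ∈ C, IsOpen c) {v : V}
    (hv : ∀ τ : ℝ, 0 ≤ τ → τ • v ∈ K) {T : ℝ} (hT : 0 ≤ T)
    (hcov : ∀ τ ∈ Icc 0 T, y + τ • v ∈ ⋃₀ C) : CellChainReachable C K xs (y + T • v) := by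
  let γ : Icc 0 T → V := fun τ => y + (τ : ℝ) • v
  have hγ : Continuous γ := by fun_prop
  have hγC : univ ⊆ ⋃ d : C, γ ⁻¹' d := fun τ _ => by
    obtain ⟨d, hd, hτd⟩ := hcov τ τ.2
    exact mem_iUnion.2 ⟨⟨d, hd⟩, hτd⟩
  obtain ⟨t, ht0, ht, ⟨m, htm⟩, hsub⟩ :=
    exists_monotone_Icc_subset_open_cover_Icc hT (fun d : C => (hC d d.2).preimage hγ) hγC
  have key (k : ℕ) : CellChainReachable C K xs (γ (t k)) := by
    induction k with
    | zero => simpa [γ, ht0] using h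
    | succ k ih =>
      obtain ⟨d, hd⟩ := hsub k
      have hle : t k ≤ t (k + 1) := ht k.le_succ
      refine ih.extend d.2 (hd (left_mem_Icc.2 hle)) (hd (right_mem_Icc.2 hle)) ?_
      simpa [γ, sub_smul] using hv _ (sub_nonneg.2 (Subtype.coe_le_coe.2 hle))
  simpa [γ, htm m le_rfl] using key m

theorem runEnd_of_safeSched {M : Type*} {R : M → V} (hC : ∀ c ∈ C, IsOpen c)
    (hR : ∀ m (τ : ℝ), 0 ≤ τ → τ • R m ∈ K) :
    ∀ (σ : List (M × ℝ)) {y : V}, (∀ p ∈ σ, 0 ≤ p.2) → SafeSched R (⋃₀ C) y σ →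
      CellChainReachable C K xs y → CellChainReachable C K xs (runEnd R y σ)
  | [], _, _, _, h => h
  | (m, _) :: σ, _, hσ, hsafe, h =>
    runEnd_of_safeSched hC hR σ (fun p hp => hσ p (List.mem_cons_of_mem _ hp)) hsafe.2
      (h.add_smul hC (hR m) (hσ _ List.mem_cons_self) hsafe.1)

end CellChainReachable

end CellChain

theorem smul_mem_span_range {M V : Type*} [AddCommGroup V] [Module ℝ V] (R : M → V) (m : M)
    {τ : ℝ} (hτ : 0 ≤ τ) : τ • R m ∈ Submodule.span ℝ≥0 (range R) :=
  Submodule.smul_mem _ (⟨τ, hτ⟩ : ℝ≥0) (Submodule.subset_span (mem_range_self m))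

namespace IsCellChain

variable {n : ℕ} {C : Set (Set (Fin n → ℝ))} {K : AddSubmonoid (Fin n → ℝ)}
  {xs y : Fin n → ℝ} {N : ℕ} {c : ℕ → Set (Fin n → ℝ)} {x : ℕ → Fin n → ℝ}

theorem isChannel {S : Set (Fin n → ℝ)} (h : IsCellChain C K xs y N c x)
    (hC : ∀ c ∈ C, IsCell S c) : IsChannel S N c :=
  ⟨h.one_le, fun i h1 h2 => hC _ (h.mem i ⟨h1, h2⟩), fun i h1 h2 => ⟨x i, h.link i h1 h2⟩⟩

theorem isWitness {M : Type*} [Fintype M] {R : M → Fin n → ℝ}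
    (h : IsCellChain C (Submodule.span ℝ≥0 (range R)).toAddSubmonoid xs y N c x) :
    IsWitness R xs y N c := by
  choose! a ha using fun i (h1 : 1 ≤ i) (h2 : i ≤ N) =>
    (Submodule.mem_span_range_iff_exists_fun ℝ≥0).1 (h.step i h1 h2)
  refine ⟨x, h.zero_eq, h.last_eq, h.zero_eq ▸ h.start_mem, h.last_eq ▸ h.stop_mem, h.link,
    fun i m => a i m, fun i m => (a i m).2, fun i h1 h2 => ?_⟩
  simp [← NNReal.smul_def, ha i h1 h2]

theorem le_card (h : IsCellChain C K xs y N c x) (hfin : C.Finite) :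
    N ≤ hfin.toFinset.card := by
  simpa using Finset.card_le_card_of_injOn c (s := Finset.Icc 1 N)
    (fun i hi => by simpa using h.mem i (by simpa using hi)) (by simpa using h.injOn)

end IsCellChain

theorem stmt6_general {M : Type*} [Fintype M] {n : ℕ}
    (R : M → (Fin n → ℝ)) (S : Set (Fin n → ℝ))
    (C : Set (Set (Fin n → ℝ))) (hC : IsCellCover S C)
    (xs xt : Fin n → ℝ) (hxs : xs ∈ S)
    (hsched : ∃ σ : List (M × ℝ),
      (∀ p ∈ σ, 0 ≤ p.2) ∧ SafeSched R S xs σ ∧ runEnd R xs σ = xt) :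
    ∃ (N : ℕ) (c : ℕ → Set (Fin n → ℝ)), IsChannel S N c ∧
      (∀ i, 1 ≤ i → i ≤ N → c i ∈ C) ∧
      (∀ i j, 1 ≤ i → i ≤ N → 1 ≤ j → j ≤ N → i ≠ j → c i ≠ c j) ∧
      IsWitness R xs xt N c ∧
      (∀ hfin : C.Finite, N ≤ hfin.toFinset.card) := by
  obtain ⟨hcells, hcover⟩ := hC
  subst hcover
  obtain ⟨σ, hσ, hsafe, rfl⟩ := hsched
  obtain ⟨c₀, hc₀, hxs₀⟩ := hxs
  obtain ⟨N, c, x, h⟩ := (CellChainReachable.refl hc₀ hxs₀).runEnd_of_safeSched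
    (fun d hd => (hcells d hd).1) (fun m _ => smul_mem_span_range R m) σ hσ hsafe
  exact ⟨N, c, h.isChannel hcells, fun i h1 h2 => h.mem i ⟨h1, h2⟩,
    fun i j hi1 hi2 hj1 hj2 => h.injOn.ne ⟨hi1, hi2⟩ ⟨hj1, hj2⟩, h.isWitness, h.le_card⟩

/-- If there is a finite `S`-safe schedule from `x_s` to `x_t` (for `S` open with cell
cover `C`), then there is a witness channel whose cells all belong to `C` and are
pairwise distinct; in particular, if `C` is finite then its length is at most `|C|`. -/
theorem stmt6 {M : Type*} [Fintype M] [Nonempty M] {n : ℕ} (hn : 0 < n)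
    (R : M → (Fin n → ℝ)) (S : Set (Fin n → ℝ)) (hSopen : IsOpen S)
    (C : Set (Set (Fin n → ℝ))) (hC : IsCellCover S C)
    (xs xt : Fin n → ℝ) (hxs : xs ∈ S) (hxt : xt ∈ S)
    (hsched : ∃ σ : List (M × ℝ),
      (∀ p ∈ σ, 0 ≤ p.2) ∧ SafeSched R S xs σ ∧ runEnd R xs σ = xt) :
    ∃ (N : ℕ) (c : ℕ → Set (Fin n → ℝ)), IsChannel S N c ∧
      (∀ i, 1 ≤ i → i ≤ N → c i ∈ C) ∧
      (∀ i j, 1 ≤ i → i ≤ N → 1 ≤ j → j ≤ N → i ≠ j → c i ≠ c j) ∧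
      IsWitness R xs xt N c ∧
      (∀ hfin : C.Finite, N ≤ hfin.toFinset.card) :=
  stmt6_general R S C hC xs xt hxs hsched
end

section
/- Let O_1, …, O_k ⊆ ℝⁿ be finitely many closed convex polytopes, each of the form {x ∈ ℝⁿ : A x ≤ b} for some real matrix A and vector b, and let S = ℝⁿ \ (O_1 ∪ … ∪ O_k). Then S admits a finite cell cover: there exist finitely many open convex sets c_1, …, c_N, each contained in S, whose union equals S. -/
open Matrix

section HalfSpace

variable {ι : Type*} [Fintype ι]

theorem isOpen_setOf_lt_dotProduct (v : ι → ℝ) (β : ℝ) : IsOpen {x : ι → ℝ | β < v ⬝ᵥ x} :=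
  isOpen_lt continuous_const (continuous_const.dotProduct continuous_id)

theorem convex_setOf_lt_dotProduct (v : ι → ℝ) (β : ℝ) : Convex ℝ {x : ι → ℝ | β < v ⬝ᵥ x} :=
  convex_halfSpace_gt ⟨dotProduct_add v, fun c x => dotProduct_smul c v x⟩ β

theorem compl_setOf_mulVec_le {m : Type*} (A : Matrix m ι ℝ) (b : m → ℝ) :
    {x | ∀ r, (A *ᵥ x) r ≤ b r}ᶜ = ⋃ r, {x | b r < A r ⬝ᵥ x} := by
  ext x
  simp [mulVec]

end HalfSpace

theorem compl_iUnion_eq_iUnion_iInter {α ι : Type*} {κ : ι → Type*} (S : ι → Set α)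
    (H : ∀ i, κ i → Set α) (hH : ∀ i, (S i)ᶜ = ⋃ r, H i r) :
    (⋃ i, S i)ᶜ = ⋃ f : ∀ i, κ i, ⋂ i, H i (f i) := by
  simp_rw [Set.compl_iUnion, hH]
  exact iInf_iSup_eq

theorem exists_fin_cellCover_of_finite {n : ℕ} {ι : Type*} [Finite ι] {S : Set (Fin n → ℝ)}
    (c : ι → Set (Fin n → ℝ)) (hc : ∀ j, IsCell S (c j)) (hcS : ⋃ j, c j = S) :
    ∃ (N : ℕ) (c' : Fin N → Set (Fin n → ℝ)), (∀ j, IsCell S (c' j)) ∧ ⋃ j, c' j = S := by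
  obtain ⟨N, ⟨e⟩⟩ := Finite.exists_equiv_fin ι
  exact ⟨N, c ∘ e.symm, fun j => hc _, by rw [← hcS]; exact e.symm.iSup_comp⟩

theorem stmt7_general {n : ℕ} (k : ℕ) (O : Fin k → Set (Fin n → ℝ))
    (hO : ∀ i, ∃ (m : ℕ) (A : Matrix (Fin m) (Fin n) ℝ) (b : Fin m → ℝ),
      O i = {x | ∀ r, A.mulVec x r ≤ b r}) :
    ∃ (N : ℕ) (c : Fin N → Set (Fin n → ℝ)),
      (∀ j, IsCell (⋃ i, O i)ᶜ (c j)) ∧ (⋃ j, c j) = (⋃ i, O i)ᶜ := by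
  choose m A b hAb using hO
  let H : ∀ i, Fin (m i) → Set (Fin n → ℝ) := fun i r => {x | b i r < A i r ⬝ᵥ x}
  have hcompl : (⋃ i, O i)ᶜ = ⋃ f : ∀ i, Fin (m i), ⋂ i, H i (f i) :=
    compl_iUnion_eq_iUnion_iInter O H fun i => hAb i ▸ compl_setOf_mulVec_le (A i) (b i)
  refine exists_fin_cellCover_of_finite _ (fun f => ⟨?_, ?_, ?_⟩) hcompl.symm
  · exact isOpen_iInter_of_finite fun i => isOpen_setOf_lt_dotProduct _ _
  · exact convex_iInter fun i => convex_setOf_lt_dotProduct _ _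
  · rw [hcompl]
    exact Set.subset_iUnion_of_subset f subset_rfl

/-- If `O 0, …, O (k-1)` are closed convex polytopes (each given by a finite system of
linear inequalities `A x ≤ b`), then the complement `S = ℝⁿ \ (O 0 ∪ … ∪ O (k-1))`
admits a finite cell cover: finitely many open convex subsets of `S` whose union is `S`. -/
theorem stmt7 {n : ℕ} (hn : 0 < n) (k : ℕ) (O : Fin k → Set (Fin n → ℝ))
    (hO : ∀ i, ∃ (m : ℕ) (A : Matrix (Fin m) (Fin n) ℝ) (b : Fin m → ℝ),
      O i = {x | ∀ r, A.mulVec x r ≤ b r}) :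
    ∃ (N : ℕ) (c : Fin N → Set (Fin n → ℝ)),
      (∀ j, IsCell (⋃ i, O i)ᶜ (c j)) ∧ (⋃ j, c j) = (⋃ i, O i)ᶜ :=
  stmt7_general k O hO
end
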